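/- arXiv:0706.4069 — 3 statements merged into one kernel-verified Lean document; each statement's English description precedes it below -/
import Mathlib

section
/- Let (η_n)_{n∈ℤ}, (p_n)_{n∈ℤ}, (q_n)_{n∈ℤ} be real sequences with p_n + q_n = 1, 0 < p_n < 1, 0 ≤ η_n < 1, satisfying η_n = q_n + p_n η_{n+1} η_n for all n. Set δ_n = 1 - η_n and ρ̂(n) = q_n/p_n. Then for all n ≤ -1: δ_n = (ρ̂(n) ρ̂(n+1) ⋯ ρ̂(-1))^{-1} · η_n η_{n+1} ⋯ η_{-1} · δ_0. -/
/-!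
Subtracting the recursion `η n = q n + p n * η (n + 1) * η n` from `p n + q n = 1` gives
`q n * δ n = p n * η n * δ (n + 1)`, i.e. `δ n = ρ̂(n)⁻¹ * η n * δ (n + 1)`, and this telescopes
from `n` up to `0`.
-/

open Finset

theorem Int.eq_prod_Ico_mul_of_eq_mul_succ {M : Type*} [CommMonoid M] {c f : ℤ → M}
    (h : ∀ k, f k = c k * f (k + 1)) {n m : ℤ} (hnm : n ≤ m) :
    f n = (∏ j ∈ Ico n m, c j) * f m := by
  induction n, hnm using Int.leInductionDown with
  | base => simp
  | pred k hkm ih =>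
    have hk : k - 1 ∉ Ico k m := by simp
    rw [← insert_Ico_left_eq_Ico_sub_one hkm, prod_insert hk, mul_assoc, ← ih, h, sub_add_cancel]

theorem mul_one_sub_eq_of_eq_add_mul {p q η η' : ℝ} (hpq : p + q = 1)
    (hrec : η = q + p * η' * η) : q * (1 - η) = p * η * (1 - η') := by
  linear_combination (-η) * hpq - hrec

theorem delta_prod_identity_general (η p q : ℤ → ℝ)
    (hpq : ∀ n, p n + q n = 1) (hp : ∀ n, 0 < p n ∧ p n < 1)
    (hrec : ∀ n, η n = q n + p n * η (n + 1) * η n) :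
    ∀ n : ℤ, n ≤ -1 →
      1 - η n = (∏ j ∈ Finset.Icc n (-1 : ℤ), q j / p j)⁻¹ *
        (∏ j ∈ Finset.Icc n (-1 : ℤ), η j) * (1 - η 0) := by
  intro n hn
  have step (k : ℤ) : 1 - η k = ((q k / p k)⁻¹ * η k) * (1 - η (k + 1)) := by
    have hp0 : p k ≠ 0 := (hp k).1.ne'
    have hq0 : q k ≠ 0 := by linarith [hpq k, (hp k).2]
    rw [inv_div]
    field_simp
    linear_combination mul_one_sub_eq_of_eq_add_mul (hpq k) (hrec k)
  have hIcc : Icc n (-1 : ℤ) = Ico n 0 := Icc_sub_one_right_eq_Ico n 0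
  rw [Int.eq_prod_Ico_mul_of_eq_mul_succ (f := fun k ↦ 1 - η k) step (by omega : n ≤ 0),
    hIcc, prod_mul_distrib, prod_inv_distrib]

/-- The algebraic identity (2.70)–(2.71): if `η n = q n + p n * η (n+1) * η n` with
`p n + q n = 1`, `0 < p n < 1`, `0 ≤ η n < 1`, then for `n ≤ -1`,
`δ n = (∏ ρ̂)⁻¹ * (∏ η) * δ 0` where `δ n = 1 - η n` and `ρ̂ n = q n / p n`. -/
theorem delta_prod_identity (η p q : ℤ → ℝ)
    (hpq : ∀ n, p n + q n = 1) (hp : ∀ n, 0 < p n ∧ p n < 1)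
    (hη : ∀ n, 0 ≤ η n ∧ η n < 1)
    (hrec : ∀ n, η n = q n + p n * η (n + 1) * η n) :
    ∀ n : ℤ, n ≤ -1 →
      1 - η n = (∏ j ∈ Finset.Icc n (-1 : ℤ), q j / p j)⁻¹ *
        (∏ j ∈ Finset.Icc n (-1 : ℤ), η j) * (1 - η 0) :=
  delta_prod_identity_general η p q hpq hp hrec
end

section
/- Let κ ∈ (0, 1/2], integers n₀ ≥ 3 and L₀ ≥ 1, and let ρ̂(j) ∈ [κ^{2L₀}, κ^{-2L₀}] for -n₀+1 ≤ j ≤ n₀+1. Define ∏_{a,b} = ∏_{j=a+1}^{b} ρ̂(j)^{-1} (with ∏_{a,a} = 1), f(n₀+2) = 0, f(n₀+1) = 1, and f(i) = ∑_{i ≤ m ≤ n₀+1} ∏_{m, n₀+1} for i ≤ n₀. If κ^{4n₀L₀}·(2n₀+1)·κ^{-4n₀L₀}·κ^{9·2n₀L₀} ≤ κ^{4n₀L₀} (which holds whenever L₀ is large enough that (2n₀+1)κ^{5n₀L₀} ≤ κ^{4n₀L₀}), then f(1-n₀) - f(0) - f(1-n₀)·κ^{18n₀L₀} ≥ ∏_{-n₀+1,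 n₀+1}. -/
/-!
Writing `P m = ∏_{j=m+1}^{n₀+1} ρ̂(j)⁻¹`, the difference `f(1-n₀) - f(0)` is
`P(1-n₀) + ∑_{2-n₀ ≤ m ≤ -1} P m`, and the sum contains the term `P(-1)`. Each `P m` with
`m ≥ 1-n₀` has at most `2n₀` factors in `[κ^{2L₀}, κ^{-2L₀}]`, so `P(-1) ≥ κ^{4n₀L₀}` and
`f(1-n₀) ≤ (2n₀+1) κ^{-4n₀L₀}`. Since `κ ≤ 1/2`, `(2n₀+1) κ^{10n₀L₀} ≤ 1`, hence
`f(1-n₀) κ^{18n₀L₀} ≤ κ^{4n₀L₀} ≤ P(-1)`.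
-/

open Finset

section ProdInvBounds

variable {𝕜 ι : Type*} [Field 𝕜] [LinearOrder 𝕜] [IsStrictOrderedRing 𝕜]

lemma inv_mem_Icc_of_mem_Icc_inv {a x : 𝕜} (ha : 0 < a) (hx : a ≤ x ∧ x ≤ a⁻¹) :
    a ≤ x⁻¹ ∧ x⁻¹ ≤ a⁻¹ :=
  ⟨le_inv_of_le_inv₀ (ha.trans_le hx.1) hx.2, inv_anti₀ ha hx.1⟩

lemma pow_le_prod_inv_and_prod_inv_le_inv_pow {s : Finset ι} {x : ι → 𝕜} {a : 𝕜} {k : ℕ}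
    (ha0 : 0 < a) (ha1 : a ≤ 1) (hs : #s ≤ k) (hx : ∀ j ∈ s, a ≤ x j ∧ x j ≤ a⁻¹) :
    a ^ k ≤ ∏ j ∈ s, (x j)⁻¹ ∧ ∏ j ∈ s, (x j)⁻¹ ≤ (a ^ k)⁻¹ := by
  have hxinv := fun j hj => inv_mem_Icc_of_mem_Icc_inv ha0 (hx j hj)
  constructor
  · calc a ^ k ≤ a ^ #s := pow_le_pow_of_le_one ha0.le ha1 hs
      _ = ∏ _j ∈ s, a := (prod_const a).symm
      _ ≤ ∏ j ∈ s, (x j)⁻¹ := prod_le_prod (fun _ _ => ha0.le) fun j hj => (hxinv j hj).1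
  · calc ∏ j ∈ s, (x j)⁻¹ ≤ ∏ _j ∈ s, a⁻¹ :=
          prod_le_prod (fun j hj => ha0.le.trans (hxinv j hj).1) fun j hj => (hxinv j hj).2
      _ = a⁻¹ ^ #s := prod_const _
      _ ≤ a⁻¹ ^ k := pow_le_pow_right₀ (one_le_inv₀ ha0 |>.mpr ha1) hs
      _ = (a ^ k)⁻¹ := inv_pow a k

end ProdInvBounds

lemma natCast_mul_pow_le_one_of_le_half {κ : ℝ} (hκ0 : 0 ≤ κ) (hκ : κ ≤ 1 / 2) {N k : ℕ}
    (hNk : N ≤ k) : (N : ℝ) * κ ^ k ≤ 1 := by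
  have hN : (N : ℝ) < 2 ^ N := by exact_mod_cast N.lt_two_pow_self
  calc (N : ℝ) * κ ^ k ≤ N * (1 / 2) ^ N := by
        gcongr
        exact (pow_le_pow_left₀ hκ0 hκ k).trans
          (pow_le_pow_of_le_one (by norm_num) (by norm_num) hNk)
    _ = N / 2 ^ N := by rw [one_div, inv_pow, div_eq_mul_inv]
    _ ≤ 1 := (div_le_one (by positivity)).mpr hN.le

lemma sum_Icc_sub_sum_Icc {M : Type*} [AddCommGroup M] (g : ℤ → M) {a b c : ℤ}
    (hab : a ≤ b) (hbc : b ≤ c + 1) :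
    ∑ m ∈ Icc a c, g m - ∑ m ∈ Icc b c, g m = ∑ m ∈ Ico a b, g m := by
  rw [← Ico_add_one_right_eq_Icc, ← Ico_add_one_right_eq_Icc, ← Ico_union_Ico_eq_Ico hab hbc,
    sum_union (Ico_disjoint_Ico_consecutive a b (c + 1)), add_sub_cancel_right]

lemma natCast_mul_inv_pow_mul_pow_le_pow_of_le_half {κ : ℝ} (hκ0 : 0 < κ) (hκ : κ ≤ 1 / 2)
    {n L : ℕ} (hn : 1 ≤ n) (hL : 1 ≤ L) :
    (2 * n + 1) * (κ ^ (4 * n * L))⁻¹ * κ ^ (18 * n * L) ≤ κ ^ (4 * n * L) := by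
  have hsmall : ((2 * n + 1 : ℕ) : ℝ) * κ ^ (10 * n * L) ≤ 1 :=
    natCast_mul_pow_le_one_of_le_half hκ0.le hκ (by nlinarith)
  have h18 : κ ^ (18 * n * L) = κ ^ (10 * n * L) * κ ^ (4 * n * L) * κ ^ (4 * n * L) := by
    rw [← pow_add, ← pow_add]; ring_nf
  have hA0 : 0 < κ ^ (4 * n * L) := pow_pos hκ0 _
  rw [h18, show (2 * n + 1 : ℝ) * (κ ^ (4 * n * L))⁻¹ *
      (κ ^ (10 * n * L) * κ ^ (4 * n * L) * κ ^ (4 * n * L))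
      = ((2 * n + 1 : ℕ) : ℝ) * κ ^ (10 * n * L) * κ ^ (4 * n * L) by push_cast; field_simp]
  exact mul_le_of_le_one_left hA0.le hsmall

lemma sum_Icc_le_toNat_mul {g : ℤ → ℝ} {a b : ℤ} {C : ℝ} (hg : ∀ m ∈ Icc a b, g m ≤ C) :
    ∑ m ∈ Icc a b, g m ≤ (b + 1 - a).toNat * C := by
  simpa [Int.card_Icc] using sum_le_card_nsmul _ _ _ hg

theorem estimate_A12_general (κ : ℝ) (hκ0 : 0 < κ) (hκ : κ ≤ 1/2)
    (n₀ L₀ : ℕ) (hn₀ : 3 ≤ n₀) (hL₀ : 1 ≤ L₀)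
    (ρ : ℤ → ℝ)
    (hρ : ∀ j ∈ Finset.Icc (-(n₀ : ℤ) + 1) ((n₀ : ℤ) + 1),
      κ ^ (2 * L₀) ≤ ρ j ∧ ρ j ≤ (κ ^ (2 * L₀))⁻¹)
    (f : ℤ → ℝ)
    (hf : ∀ i : ℤ, i ≤ (n₀ : ℤ) + 1 →
      f i = ∑ m ∈ Finset.Icc i ((n₀ : ℤ) + 1),
        ∏ j ∈ Finset.Icc (m + 1) ((n₀ : ℤ) + 1), (ρ j)⁻¹) :
    f (1 - (n₀ : ℤ)) - f 0 - f (1 - (n₀ : ℤ)) * κ ^ (18 * n₀ * L₀) ≥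
      ∏ j ∈ Finset.Icc (-(n₀ : ℤ) + 2) ((n₀ : ℤ) + 1), (ρ j)⁻¹ := by
  set P : ℤ → ℝ := fun m => ∏ j ∈ Icc (m + 1) ((n₀ : ℤ) + 1), (ρ j)⁻¹
  set A := κ ^ (4 * n₀ * L₀)
  have hP : ∀ m, 1 - (n₀ : ℤ) ≤ m → A ≤ P m ∧ P m ≤ A⁻¹ := fun m hm => by
    rw [show A = (κ ^ (2 * L₀)) ^ (2 * n₀) by
      rw [← pow_mul, show 2 * L₀ * (2 * n₀) = 4 * n₀ * L₀ by ring]]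
    exact pow_le_prod_inv_and_prod_inv_le_inv_pow (pow_pos hκ0 _)
      (pow_le_one₀ hκ0.le (hκ.trans (by norm_num))) (by rw [Int.card_Icc]; omega)
      fun j hj => hρ j (Icc_subset_Icc (by omega) le_rfl hj)
  have hdiff : f (1 - n₀) - f 0 = P (1 - n₀) + ∑ m ∈ Ico (2 - (n₀ : ℤ)) 0, P m := by
    rw [hf _ (by omega), hf _ (by omega), sum_Icc_sub_sum_Icc P (by omega) (by omega),
      ← insert_Ico_add_one_left_eq_Ico (by omega), sum_insert (by simp),
      show (1 : ℤ) - n₀ + 1 = 2 - n₀ by ring]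
  have hf_le : f (1 - n₀) ≤ (2 * n₀ + 1) * A⁻¹ := by
    rw [hf _ (by omega), show (2 * n₀ + 1 : ℝ) = (((n₀ : ℤ) + 1 + 1 - (1 - n₀)).toNat : ℕ) by
      rw [show ((n₀ : ℤ) + 1 + 1 - (1 - n₀)).toNat = 2 * n₀ + 1 by omega]; push_cast; ring]
    exact sum_Icc_le_toNat_mul fun m hm => (hP m (mem_Icc.mp hm).1).2
  have htail : P (-1) ≤ ∑ m ∈ Ico (2 - (n₀ : ℤ)) 0, P m :=
    single_le_sum (fun m hm => (pow_pos hκ0 _).le.trans (hP m (by rw [mem_Ico] at hm; omega)).1)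
      (by rw [mem_Ico]; omega)
  have hcorr : f (1 - n₀) * κ ^ (18 * n₀ * L₀) ≤ ∑ m ∈ Ico (2 - (n₀ : ℤ)) 0, P m := calc
    f (1 - n₀) * κ ^ (18 * n₀ * L₀) ≤ (2 * n₀ + 1) * A⁻¹ * κ ^ (18 * n₀ * L₀) := by gcongr
    _ ≤ A := natCast_mul_inv_pow_mul_pow_le_pow_of_le_half hκ0 hκ (by omega) hL₀
    _ ≤ P (-1) := (hP (-1) (by omega)).1
    _ ≤ _ := htail
  rw [ge_iff_le, show -(n₀ : ℤ) + 2 = 1 - n₀ + 1 by ring]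
  linarith

/-- The algebraic estimate (A.12) from Appendix A.1. With
`Π_{a,b} = ∏_{j=a+1}^{b} ρ̂(j)⁻¹` and
`f(i) = ∑_{i ≤ m ≤ n₀+1} Π_{m, n₀+1}`, if
`κ^{4n₀L₀} (2n₀+1) κ^{-4n₀L₀} κ^{18n₀L₀} ≤ κ^{4n₀L₀}` then
`f(1-n₀) - f(0) - f(1-n₀) κ^{18n₀L₀} ≥ Π_{-n₀+1, n₀+1}`. -/
theorem estimate_A12 (κ : ℝ) (hκ0 : 0 < κ) (hκ : κ ≤ 1/2)
    (n₀ L₀ : ℕ) (hn₀ : 3 ≤ n₀) (hL₀ : 1 ≤ L₀)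
    (ρ : ℤ → ℝ)
    (hρ : ∀ j ∈ Finset.Icc (-(n₀ : ℤ) + 1) ((n₀ : ℤ) + 1),
      κ ^ (2 * L₀) ≤ ρ j ∧ ρ j ≤ (κ ^ (2 * L₀))⁻¹)
    (f : ℤ → ℝ)
    (hf : ∀ i : ℤ, i ≤ (n₀ : ℤ) + 1 →
      f i = ∑ m ∈ Finset.Icc i ((n₀ : ℤ) + 1),
        ∏ j ∈ Finset.Icc (m + 1) ((n₀ : ℤ) + 1), (ρ j)⁻¹)
    (hcond : κ ^ (4 * n₀ * L₀) * (2 * (n₀ : ℝ) + 1) * (κ ^ (4 * n₀ * L₀))⁻¹ *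
        κ ^ (18 * n₀ * L₀) ≤ κ ^ (4 * n₀ * L₀)) :
    f (1 - (n₀ : ℤ)) - f 0 - f (1 - (n₀ : ℤ)) * κ ^ (18 * n₀ * L₀) ≥
      ∏ j ∈ Finset.Icc (-(n₀ : ℤ) + 2) ((n₀ : ℤ) + 1), (ρ j)⁻¹ :=
  estimate_A12_general κ hκ0 hκ n₀ L₀ hn₀ hL₀ ρ hρ f hf
end

section
/- Let ρ: Ω → [0, M] be a random variable with 1 ≤ M < ∞, let q = ρ/(1+ρ) ∈ [0,1], and suppose there exist constants γ ∈ (1/2, 1), c > 0 and L ≥ 1 such that E[q] ≤ 2(d-1)e^{-cL^γ} and ρ ≤ κ^{-(L+3)} almost surely (with κ ∈ (0,1), d ≥ 2). Then for every a ∈ (0,1) and c' ∈ (0, c): E[ρ^a] ≤ (2(d-1))^a e^{(c'-c)aL^γ} + 4(d-1) κ^{-a(L+3)} e^{-cL^γ}. -/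
/-!
With `q = ρ / (1 + ρ)` and `B = κ ^ (-(L + 3))`, split at `ρ = 1`. Where `ρ ≤ 1`,
`ρ ^ a = q ^ a (1 + ρ) ^ a ≤ q ^ a (1 + ρ) = q ^ a + q · q ^ a (1 + ρ) ≤ q ^ a + 2 B ^ a q`;
where `ρ > 1`, `q ≥ 1/2`, so `ρ ^ a ≤ B ^ a ≤ 2 B ^ a q`. Jensen's inequality for the concave
map `t ↦ t ^ a` then gives `E[ρ ^ a] ≤ E[q] ^ a + 2 B ^ a E[q]`, and `E[q] ≤ 2(d-1) e^{-cL^γ}`.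
-/

open MeasureTheory

theorem Real.rpow_le_rpow_div_one_add_add_mul {r B a : ℝ} (hr : 0 ≤ r) (hrB : r ≤ B)
    (ha₀ : 0 ≤ a) (ha₁ : a ≤ 1) :
    r ^ a ≤ (r / (1 + r)) ^ a + 2 * B ^ a * (r / (1 + r)) := by
  set s := r / (1 + r)
  have h1r : 0 < 1 + r := by linarith
  have hs₀ : 0 ≤ s := by positivity
  have hr_eq : r = s * (1 + r) := (div_mul_cancel₀ r h1r.ne').symm
  have hBa : 0 ≤ B ^ a := Real.rpow_nonneg (hr.trans hrB) a
  rcases le_or_gt r 1 with hr1 | hr1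
  · have hsB : s ^ a ≤ B ^ a :=
      Real.rpow_le_rpow hs₀ ((div_le_self hr (by linarith)).trans hrB) ha₀
    calc r ^ a = s ^ a * (1 + r) ^ a := by rw [← Real.mul_rpow hs₀ h1r.le, ← hr_eq]
      _ ≤ s ^ a * (1 + r) := by
          gcongr; exact Real.rpow_le_self_of_one_le (by linarith) ha₁
      _ = s ^ a + s * (s ^ a * (1 + r)) := by linear_combination s ^ a * hr_eq
      _ ≤ s ^ a + s * (B ^ a * 2) := by gcongr; linarith
      _ = s ^ a + 2 * B ^ a * s := by ring
  · have hs_half : 1 / 2 ≤ s := by rw [le_div_iff₀ h1r]; linarith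
    calc r ^ a ≤ B ^ a := Real.rpow_le_rpow hr hrB ha₀
      _ ≤ 2 * B ^ a * s := by nlinarith
      _ ≤ s ^ a + 2 * B ^ a * s := le_add_of_nonneg_left (by positivity)

section

variable {Ω : Type*} [MeasurableSpace Ω] {μ : Measure Ω} [IsProbabilityMeasure μ]

theorem integral_rpow_le_rpow_integral {f : Ω → ℝ} {a : ℝ} (hf₀ : ∀ᵐ ω ∂μ, 0 ≤ f ω)
    (hf : Integrable f μ) (ha₀ : 0 ≤ a) (ha₁ : a ≤ 1) :
    ∫ ω, f ω ^ a ∂μ ≤ (∫ ω, f ω ∂μ) ^ a := by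
  by_cases hfa : Integrable (fun ω ↦ f ω ^ a) μ
  · exact (Real.concaveOn_rpow ha₀ ha₁).le_map_integral
      (Real.continuous_rpow_const ha₀).continuousOn isClosed_Ici hf₀ hf hfa
  · rw [integral_undef hfa]
    exact Real.rpow_nonneg (integral_nonneg_of_ae hf₀) a

theorem integral_rpow_le_of_ae_le {ρ : Ω → ℝ} {B a : ℝ} (hρ : Measurable ρ)
    (hρ₀ : ∀ ω, 0 ≤ ρ ω) (hρB : ∀ᵐ ω ∂μ, ρ ω ≤ B) (ha₀ : 0 ≤ a) (ha₁ : a ≤ 1) :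
    ∫ ω, ρ ω ^ a ∂μ ≤
      (∫ ω, ρ ω / (1 + ρ ω) ∂μ) ^ a + 2 * B ^ a * ∫ ω, ρ ω / (1 + ρ ω) ∂μ := by
  set q := fun ω ↦ ρ ω / (1 + ρ ω)
  have hq₀ : ∀ ω, 0 ≤ q ω := fun ω ↦ div_nonneg (hρ₀ ω) (by linarith [hρ₀ ω])
  have hq₁ : ∀ ω, q ω ≤ 1 := fun ω ↦ by
    rw [div_le_one (by linarith [hρ₀ ω])]; linarith
  have hq_meas : Measurable q := hρ.div (measurable_const.add hρ)
  have hq : Integrable q μ := by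
    refine .of_bound hq_meas.aestronglyMeasurable 1 (.of_forall fun ω ↦ ?_)
    rw [Real.norm_of_nonneg (hq₀ ω)]
    exact hq₁ ω
  have hqa : Integrable (fun ω ↦ q ω ^ a) μ := by
    refine .of_bound (hq_meas.pow_const a).aestronglyMeasurable 1 (.of_forall fun ω ↦ ?_)
    rw [Real.norm_of_nonneg (Real.rpow_nonneg (hq₀ ω) a)]
    exact Real.rpow_le_one (hq₀ ω) (hq₁ ω) ha₀
  have hρa : Integrable (fun ω ↦ ρ ω ^ a) μ := by
    refine .of_bound ((hρ.pow_const a).aestronglyMeasurable) (B ^ a) ?_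
    filter_upwards [hρB] with ω hω
    rw [Real.norm_of_nonneg (Real.rpow_nonneg (hρ₀ ω) a)]
    exact Real.rpow_le_rpow (hρ₀ ω) hω ha₀
  calc ∫ ω, ρ ω ^ a ∂μ ≤ ∫ ω, q ω ^ a + 2 * B ^ a * q ω ∂μ := by
        refine integral_mono_ae hρa (hqa.add (hq.const_mul _)) ?_
        filter_upwards [hρB] with ω hω
        exact Real.rpow_le_rpow_div_one_add_add_mul (hρ₀ ω) hω ha₀ ha₁
    _ = ∫ ω, q ω ^ a ∂μ + 2 * B ^ a * ∫ ω, q ω ∂μ := by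
        rw [integral_add hqa (hq.const_mul _), integral_const_mul]
    _ ≤ (∫ ω, q ω ∂μ) ^ a + 2 * B ^ a * ∫ ω, q ω ∂μ := by
        gcongr
        exact integral_rpow_le_rpow_integral (.of_forall hq₀) hq ha₀ ha₁

end

theorem moment_bound_of_exit_estimate_general
    {Ω : Type*} [MeasurableSpace Ω] (ℙ : Measure Ω) [IsProbabilityMeasure ℙ]
    (d : ℕ) (κ : ℝ) (hκ0 : 0 < κ)
    (ρ : Ω → ℝ) (hmeas : Measurable ρ)
    (hρ0 : ∀ ω, 0 ≤ ρ ω)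
    (γ c L : ℝ) (hL : 1 ≤ L)
    (hq : ∫ ω, ρ ω / (1 + ρ ω) ∂ℙ ≤ 2 * ((d : ℝ) - 1) * Real.exp (-c * L ^ γ))
    (hρbdd : ∀ᵐ ω ∂ℙ, ρ ω ≤ κ ^ (-(L + 3)))
    (a : ℝ) (ha : 0 < a ∧ a < 1) (c' : ℝ) (hc' : 0 < c' ∧ c' < c) :
    ∫ ω, (ρ ω) ^ a ∂ℙ ≤
      (2 * ((d : ℝ) - 1)) ^ a * Real.exp ((c' - c) * a * L ^ γ) +
        4 * ((d : ℝ) - 1) * κ ^ (-(a * (L + 3))) * Real.exp (-c * L ^ γ) := by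
  obtain ⟨ha₀, ha₁⟩ := ha
  have hq₀ : 0 ≤ ∫ ω, ρ ω / (1 + ρ ω) ∂ℙ :=
    integral_nonneg fun ω ↦ div_nonneg (hρ0 ω) (by linarith [hρ0 ω])
  have hd : 0 ≤ 2 * ((d : ℝ) - 1) := nonneg_of_mul_nonneg_left (hq₀.trans hq) (Real.exp_pos _)
  have hBa : (κ ^ (-(L + 3))) ^ a = κ ^ (-(a * (L + 3))) := by
    rw [← Real.rpow_mul hκ0.le]; ring_nf
  have hexp : Real.exp (-c * L ^ γ) ^ a ≤ Real.exp ((c' - c) * a * L ^ γ) := by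
    rw [← Real.exp_mul, Real.exp_le_exp]
    nlinarith [mul_pos hc'.1 ha₀, Real.rpow_nonneg (by linarith : 0 ≤ L) γ]
  calc ∫ ω, ρ ω ^ a ∂ℙ
      ≤ (∫ ω, ρ ω / (1 + ρ ω) ∂ℙ) ^ a + 2 * (κ ^ (-(L + 3))) ^ a * ∫ ω, ρ ω / (1 + ρ ω) ∂ℙ :=
        integral_rpow_le_of_ae_le hmeas hρ0 hρbdd ha₀.le ha₁.le
    _ ≤ (2 * ((d : ℝ) - 1) * Real.exp (-c * L ^ γ)) ^ a
          + 2 * (κ ^ (-(L + 3))) ^ a * (2 * ((d : ℝ) - 1) * Real.exp (-c * L ^ γ)) := by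
        gcongr
    _ = (2 * ((d : ℝ) - 1)) ^ a * Real.exp (-c * L ^ γ) ^ a
          + 4 * ((d : ℝ) - 1) * κ ^ (-(a * (L + 3))) * Real.exp (-c * L ^ γ) := by
        rw [Real.mul_rpow hd (Real.exp_pos _).le, hBa]; ring
    _ ≤ _ := by gcongr

/-- The moment bound (2.59)–(2.60): if `ρ : Ω → [0, M]`, `q = ρ/(1+ρ)`,
`E[q] ≤ 2(d-1) e^{-cL^γ}` and `ρ ≤ κ^{-(L+3)}` a.s., then for `a ∈ (0,1)` and
`c' ∈ (0,c)`:
`E[ρ^a] ≤ (2(d-1))^a e^{(c'-c) a L^γ} + 4(d-1) κ^{-a(L+3)} e^{-c L^γ}`. -/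
theorem moment_bound_of_exit_estimate
    {Ω : Type*} [MeasurableSpace Ω] (ℙ : Measure Ω) [IsProbabilityMeasure ℙ]
    (d : ℕ) (hd : 2 ≤ d) (κ : ℝ) (hκ0 : 0 < κ) (hκ1 : κ < 1)
    (M : ℝ) (hM : 1 ≤ M) (ρ : Ω → ℝ) (hmeas : Measurable ρ)
    (hρ0 : ∀ ω, 0 ≤ ρ ω) (hρM : ∀ ω, ρ ω ≤ M)
    (γ c L : ℝ) (hγ : 1/2 < γ ∧ γ < 1) (hc : 0 < c) (hL : 1 ≤ L)
    (hq : ∫ ω, ρ ω / (1 + ρ ω) ∂ℙ ≤ 2 * ((d : ℝ) - 1) * Real.exp (-c * L ^ γ))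
    (hρbdd : ∀ᵐ ω ∂ℙ, ρ ω ≤ κ ^ (-(L + 3)))
    (a : ℝ) (ha : 0 < a ∧ a < 1) (c' : ℝ) (hc' : 0 < c' ∧ c' < c) :
    ∫ ω, (ρ ω) ^ a ∂ℙ ≤
      (2 * ((d : ℝ) - 1)) ^ a * Real.exp ((c' - c) * a * L ^ γ) +
        4 * ((d : ℝ) - 1) * κ ^ (-(a * (L + 3))) * Real.exp (-c * L ^ γ) :=
  moment_bound_of_exit_estimate_general ℙ d κ hκ0 ρ hmeas hρ0 γ c L hL hq hρbdd a ha c' hc'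
end
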